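/- arXiv:2305.13196 — 3 statements merged into one kernel-verified Lean document; each statement's English description precedes it below -/
import Mathlib

section
/- For any matrix γ = [[a,b],[c,d]] in SL₂(ℤ), the Rademacher symbol Φ(γ) is an integer. -/
/-- The sawtooth function ((x)). -/
noncomputable def saw (x : ℝ) : ℝ := if Int.fract x = 0 then 0 else Int.fract x - 1/2

/-- The Dedekind sum s(h,k). -/
noncomputable def dedekindSum (h k : ℤ) : ℝ :=
  ∑ μ ∈ Finset.Icc 1 k, saw ((h : ℝ) * μ / k) * saw ((μ : ℝ) / k)

/-- The Rademacher symbol Φ. -/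
noncomputable def Rad (γ : Matrix (Fin 2) (Fin 2) ℤ) : ℝ :=
  if γ 1 0 = 0 then (γ 0 1 : ℝ) / (γ 1 1 : ℝ)
  else ((γ 0 0 : ℝ) + (γ 1 1 : ℝ)) / (γ 1 0 : ℝ)
    - 12 * ((γ 1 0).sign : ℝ) * dedekindSum (γ 1 1) |γ 1 0|

/-!
For `c > 0` put `r_μ = dμ mod c`. As `μ ↦ r_μ` permutes `1, …, c - 1`, the Dedekind sum reduces to
`12 c s(d, c) = 2d(c - 1)(2c - 1) - 3c(c - 1) - 12 T(d, c)` with `T(d, c) = ∑ μ ⌊dμ/c⌋`.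
Comparing `∑ r_μ² = ∑ μ²` with the expansion of `r_μ = dμ - c⌊dμ/c⌋` gives
`12 d T(d, c) ≡ d² - 1 (mod c)`; multiplying by `a ≡ d⁻¹` yields `12 T(d, c) ≡ d - a`, which is
exactly the divisibility making `Φ(γ) = (a + d)/c - 12 s(d, c)` an integer. For `c < 0`, `Φ(γ)` is
minus the same expression in `|c|`, and for `c = 0` one has `d = ±1`.
-/

open Finset

theorem sum_Icc_one_id_mul_two (n : ℤ) (hn : 0 ≤ n) : 2 * ∑ μ ∈ Icc 1 n, μ = n * (n + 1) := by
  induction n, hn using Int.leInduction with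
  | base => rfl
  | succ n hn ih =>
    rw [← insert_Icc_right_eq_Icc_add_one (by omega), sum_insert (by simp), mul_add, ih]
    ring

theorem sum_Icc_one_sq_mul_six (n : ℤ) (hn : 0 ≤ n) :
    6 * ∑ μ ∈ Icc 1 n, μ ^ 2 = n * (n + 1) * (2 * n + 1) := by
  induction n, hn using Int.leInduction with
  | base => rfl
  | succ n hn ih =>
    rw [← insert_Icc_right_eq_Icc_add_one (by omega), sum_insert (by simp), mul_add, ih]
    ring

theorem not_dvd_mul_of_mem_Icc {h k μ : ℤ} (hcop : IsCoprime h k) (hμ : μ ∈ Icc 1 (k - 1)) :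
    ¬ k ∣ h * μ := fun hdvd => by
  rw [mem_Icc] at hμ
  have := Int.le_of_dvd (by omega) (hcop.symm.dvd_of_dvd_mul_left hdvd)
  omega

theorem sum_Icc_emod_mul {M : Type*} [AddCommMonoid M] {h k : ℤ} (hk : 0 < k)
    (hcop : IsCoprime h k) (f : ℤ → M) :
    ∑ μ ∈ Icc 1 (k - 1), f (h * μ % k) = ∑ μ ∈ Icc 1 (k - 1), f μ := by
  have hmaps : Set.MapsTo (h * · % k) (Icc 1 (k - 1)) (Icc 1 (k - 1)) := fun μ hμ => by
    have hne : h * μ % k ≠ 0 := fun h0 =>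
      not_dvd_mul_of_mem_Icc hcop hμ (Int.dvd_of_emod_eq_zero h0)
    have := Int.emod_nonneg (h * μ) hk.ne'
    have := Int.emod_lt_of_pos (h * μ) hk
    simp only [coe_Icc, Set.mem_Icc]
    omega
  have hinj : Set.InjOn (h * · % k) (Icc 1 (k - 1)) := fun μ hμ ν hν hμν => by
    have hdvd : k ∣ ν - μ := hcop.symm.dvd_of_dvd_mul_left <| by
      rw [mul_sub]; exact Int.ModEq.dvd hμν
    simp only [coe_Icc, Set.mem_Icc] at hμ hν
    have := Int.eq_zero_of_abs_lt_dvd hdvd (abs_lt.2 ⟨by omega, by omega⟩)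
    omega
  exact sum_nbij _ hmaps hinj (surjOn_of_injOn_of_card_le _ hmaps hinj le_rfl) fun _ _ => rfl

theorem saw_intCast_div {m k : ℤ} (hk : 0 < k) (hm : ¬ k ∣ m) :
    saw ((m : ℝ) / k) = ((m % k : ℤ) : ℝ) / k - 1 / 2 := by
  have hk' : ((k.toNat : ℕ) : ℝ) = k := by exact_mod_cast Int.toNat_of_nonneg hk.le
  have hfract : Int.fract ((m : ℝ) / k) = ((m % k : ℤ) : ℝ) / k := by
    have := Int.fract_div_intCast_eq_div_intCast_mod (k := ℝ) (m := m) (n := k.toNat)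
    rwa [hk', Int.toNat_of_nonneg hk.le] at this
  have hne : ((m % k : ℤ) : ℝ) / k ≠ 0 :=
    div_ne_zero (by exact_mod_cast mt Int.dvd_of_emod_eq_zero hm) (by exact_mod_cast hk.ne')
  rw [saw, hfract, if_neg hne]

theorem four_mul_sq_mul_dedekindSum {h k : ℤ} (hk : 0 < k) (hcop : IsCoprime h k) :
    4 * (k : ℝ) ^ 2 * dedekindSum h k
      = ((4 * ∑ μ ∈ Icc 1 (k - 1), μ * (h * μ % k) - k ^ 2 * (k - 1) : ℤ) : ℝ) := by
  have hk₀ : (k : ℝ) ≠ 0 := by exact_mod_cast hk.ne'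
  have hIcc : Icc 1 k = insert k (Icc 1 (k - 1)) := by
    simpa using (insert_Icc_right_eq_Icc_add_one (a := (1 : ℤ)) (b := k - 1) (by omega)).symm
  have htop : saw ((k : ℝ) / k) = 0 := by simp [saw, div_self hk₀]
  have hsummand : ∀ μ ∈ Icc 1 (k - 1),
      4 * (k : ℝ) ^ 2 * (saw ((h : ℝ) * μ / k) * saw ((μ : ℝ) / k))
        = (((2 * (h * μ % k) - k) * (2 * μ - k) : ℤ) : ℝ) := fun μ hμ => by
    have hμk : μ % k = μ := by have := mem_Icc.1 hμ; exact Int.emod_eq_of_lt (by omega) (by omega)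
    have hμ' : ¬ k ∣ μ := by simpa using not_dvd_mul_of_mem_Icc (h := 1) isCoprime_one_left hμ
    rw [← Int.cast_mul, saw_intCast_div hk (not_dvd_mul_of_mem_Icc hcop hμ),
      saw_intCast_div hk hμ', hμk]
    push_cast
    field_simp
    ring
  have hsum : ∑ μ ∈ Icc 1 (k - 1), (2 * (h * μ % k) - k) * (2 * μ - k)
      = 4 * ∑ μ ∈ Icc 1 (k - 1), μ * (h * μ % k) - k ^ 2 * (k - 1) := by
    have hres := sum_Icc_emod_mul hk hcop (fun μ => μ)
    have hgauss := sum_Icc_one_id_mul_two (k - 1) (by omega)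
    have hcard : ((Icc (1 : ℤ) (k - 1)).card : ℤ) = k - 1 := by rw [Int.card_Icc]; omega
    simp only [show ∀ μ, (2 * (h * μ % k) - k) * (2 * μ - k)
        = 4 * (μ * (h * μ % k)) - 2 * k * (h * μ % k) - 2 * k * μ + k ^ 2 from fun μ => by ring,
      sum_add_distrib, sum_sub_distrib, ← mul_sum, sum_const, nsmul_eq_mul, hcard, hres]
    linear_combination (-2 * k) * hgauss + mul_sum (Icc 1 (k - 1)) (fun μ => μ) (2 * k)
  rw [dedekindSum, hIcc, sum_insert (by simp), htop, mul_zero, zero_add, mul_sum,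
    sum_congr rfl hsummand, ← Int.cast_sum, hsum]

/-- `T(h, k) = ∑_{μ=1}^{k-1} μ ⌊hμ/k⌋` (integer division is the floor for `k > 0`). -/
noncomputable def weightedFloorSum (h k : ℤ) : ℤ := ∑ μ ∈ Icc 1 (k - 1), μ * (h * μ / k)

theorem twelve_mul_mul_dedekindSum {h k : ℤ} (hk : 0 < k) (hcop : IsCoprime h k) :
    12 * k * dedekindSum h k
      = ((2 * h * (k - 1) * (2 * k - 1) - 3 * k * (k - 1) - 12 * weightedFloorSum h k : ℤ)
          : ℝ) := by
  have hU : ∑ μ ∈ Icc 1 (k - 1), μ * (h * μ % k)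
      = h * ∑ μ ∈ Icc 1 (k - 1), μ ^ 2 - k * weightedFloorSum h k := by
    simp only [weightedFloorSum, mul_sum, ← sum_sub_distrib]
    exact sum_congr rfl fun μ _ => by rw [Int.emod_def]; ring
  have hsq := sum_Icc_one_sq_mul_six (k - 1) (by omega)
  apply mul_left_cancel₀ (show (k : ℝ) ≠ 0 by exact_mod_cast hk.ne')
  calc (k : ℝ) * (12 * k * dedekindSum h k) = 3 * (4 * k ^ 2 * dedekindSum h k) := by ring
    _ = ((3 * (4 * ∑ μ ∈ Icc 1 (k - 1), μ * (h * μ % k) - k ^ 2 * (k - 1)) : ℤ) : ℝ) := by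
      rw [four_mul_sq_mul_dedekindSum hk hcop]; push_cast; ring
    _ = ((k * (2 * h * (k - 1) * (2 * k - 1) - 3 * k * (k - 1) - 12 * weightedFloorSum h k) : ℤ)
          : ℝ) := by
      congr 1; linear_combination 12 * hU + 2 * h * hsq
    _ = _ := by push_cast; ring

theorem dvd_twelve_mul_weightedFloorSum {h k : ℤ} (hk : 0 < k) (hcop : IsCoprime h k) :
    k ∣ 12 * h * weightedFloorSum h k - h ^ 2 + 1 := by
  set Q := ∑ μ ∈ Icc 1 (k - 1), (h * μ / k) ^ 2
  have hres : ∑ μ ∈ Icc 1 (k - 1), (h * μ % k) ^ 2 = ∑ μ ∈ Icc 1 (k - 1), μ ^ 2 :=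
    sum_Icc_emod_mul hk hcop (· ^ 2)
  have hexpand : ∑ μ ∈ Icc 1 (k - 1), (h * μ % k) ^ 2
      = h ^ 2 * ∑ μ ∈ Icc 1 (k - 1), μ ^ 2 - 2 * h * k * weightedFloorSum h k + k ^ 2 * Q := by
    simp only [weightedFloorSum, Q, mul_sum, ← sum_sub_distrib, ← sum_add_distrib]
    exact sum_congr rfl fun μ _ => by rw [Int.emod_def]; ring
  have hsq := sum_Icc_one_sq_mul_six (k - 1) (by omega)
  have hT : 12 * h * weightedFloorSum h k = (h ^ 2 - 1) * (k - 1) * (2 * k - 1) + 6 * k * Q :=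
    mul_left_cancel₀ hk.ne' <| by linear_combination 6 * hexpand - 6 * hres + (h ^ 2 - 1) * hsq
  exact ⟨(h ^ 2 - 1) * (2 * k - 3) + 6 * Q, by linear_combination hT⟩

theorem exists_intCast_eq_div_sub_dedekindSum {a c d : ℤ} (hc : 0 < c) (had : c ∣ a * d - 1) :
    ∃ n : ℤ, ((a : ℝ) + d) / c - 12 * dedekindSum d c = n := by
  obtain ⟨e, he⟩ := had
  have hcop : IsCoprime d c := ⟨a, -e, by linear_combination he⟩
  obtain ⟨w, hw⟩ := dvd_twelve_mul_weightedFloorSum hc hcop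
  set T := weightedFloorSum d c
  set n := a * w - 12 * e * T + d * e - 2 * d * (2 * c - 3) + 3 * (c - 1)
  have hn : c * n = a + d - (2 * d * (c - 1) * (2 * c - 1) - 3 * c * (c - 1) - 12 * T) := by
    linear_combination -a * hw + (12 * T - d) * he
  refine ⟨n, ?_⟩
  have hc₀ : (c : ℝ) ≠ 0 := by exact_mod_cast hc.ne'
  have hs := twelve_mul_mul_dedekindSum hc hcop
  have hnR : (c : ℝ) * n
      = a + d - ((2 * d * (c - 1) * (2 * c - 1) - 3 * c * (c - 1) - 12 * T : ℤ) : ℝ) := by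
    exact_mod_cast hn
  rw [div_sub' hc₀, div_eq_iff hc₀]
  linear_combination -hnR - hs

/-- For any γ ∈ SL₂(ℤ), the Rademacher symbol Φ(γ) is an integer. -/
theorem rademacher_symbol_is_integer (γ : Matrix (Fin 2) (Fin 2) ℤ)
    (hγ : γ.det = 1) : ∃ n : ℤ, Rad γ = (n : ℝ) := by
  rw [Matrix.det_fin_two] at hγ
  by_cases hc : γ 1 0 = 0
  · rw [hc, mul_zero, sub_zero] at hγ
    rw [Rad, if_pos hc]
    rcases Int.eq_one_or_neg_one_of_mul_eq_one' hγ with ⟨-, hd⟩ | ⟨-, hd⟩ <;>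
      exact ⟨γ 0 1 * γ 1 1, by rw [hd]; push_cast; ring⟩
  · obtain ⟨n, hn⟩ := exists_intCast_eq_div_sub_dedekindSum (a := γ 0 0) (d := γ 1 1)
      (abs_pos.2 hc) ((abs_dvd _ _).2 ⟨γ 0 1, by linear_combination hγ⟩)
    refine ⟨(γ 1 0).sign * n, ?_⟩
    rw [Rad, if_neg hc, Int.cast_mul, ← hn]
    rcases lt_or_gt_of_ne hc with hneg | hpos
    · simp only [Int.sign_eq_neg_one_of_neg hneg, abs_of_neg hneg]
      push_cast
      ring
    · simp only [Int.sign_eq_one_of_pos hpos, abs_of_pos hpos]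
      push_cast
      ring
end

section
/- For γ₁, γ₂ ∈ SL₂(ℤ) with γ₃ = γ₁γ₂, the Rademacher symbol satisfies Φ(γ₁γ₂) = Φ(γ₁) + Φ(γ₂) - 3·sgn(c₁c₂c₃), where cⱼ denotes the lower-left entry of γⱼ and sgn(0) = 0. -/
/-!
Right multiplication by `T^n = [[1, n], [0, 1]]` adds `n` to `Φ`, and by Dedekind reciprocity
right multiplication by `S = [[0, -1], [1, 0]]` changes `Φ(γ)` by `-3 sgn(c d)`. Hence the set of
`γ₂` for which the identity holds for every `γ₁` contains `1` and is stable under left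
multiplication by `S`, `T` and `T⁻¹` (with `S⁻¹ = S³`); the stability under `S` reduces to an
identity between signs. Since `S` and `T` generate `SL₂(ℤ)`, the identity holds everywhere.
Reciprocity itself comes from the classical lattice-point count relating `Σ μ ⌊hμ/k⌋` to
`Σ ν ⌊kν/h⌋`.
-/

open Finset
open MatrixGroups ModularGroup Matrix.SpecialLinearGroup

lemma saw_add_intCast (x : ℝ) (n : ℤ) : saw (x + n) = saw x := by
  simp only [saw, Int.fract_add_intCast]

lemma saw_intCast (n : ℤ) : saw n = 0 := by
  simp [saw]

lemma saw_neg (x : ℝ) : saw (-x) = -saw x := by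
  by_cases hx : Int.fract x = 0
  · simp [saw, hx, Int.fract_neg_eq_zero.mpr hx]
  · rw [saw, saw, Int.fract_neg hx, if_neg hx, if_neg (sub_ne_zero.mpr (Int.fract_lt_one x).ne')]
    ring

lemma saw_of_mem_Ioo {x : ℝ} (hx : x ∈ Set.Ioo 0 1) : saw x = x - 1 / 2 := by
  rw [saw, Int.fract_eq_self.mpr ⟨hx.1.le, hx.2⟩, if_neg hx.1.ne']

lemma saw_intCast_div_emod (n k : ℤ) : saw (n / k) = saw ((n % k : ℤ) / k) := by
  rcases eq_or_ne k 0 with rfl | hk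
  · simp
  · rw [← saw_add_intCast (((n % k : ℤ) : ℝ) / k) (n / k), Int.emod_def]
    congr 1
    field_simp
    push_cast
    ring

lemma two_mul_sum_Ioo_id {a b : ℤ} (hab : a < b) :
    2 * ∑ μ ∈ Ioo a b, μ = (a + b) * (b - a - 1) := by
  induction b, hab using Int.leInduction with
  | base => simp [Finset.Ioo_add_one_right_eq_Ioc]
  | succ b hab ih =>
    rw [Finset.Ioo_add_one_right_eq_Ioc, ← Ioo_insert_right hab, sum_insert (by simp), mul_add, ih]
    ring

lemma six_mul_sum_Ioo_sq {k : ℤ} (hk : 0 < k) :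
    6 * ∑ μ ∈ Ioo 0 k, μ ^ 2 = (k - 1) * k * (2 * k - 1) := by
  induction k, hk using Int.leInduction with
  | base => rfl
  | succ k hk ih =>
    rw [Finset.Ioo_add_one_right_eq_Ioc, ← Ioo_insert_right hk, sum_insert (by simp), mul_add, ih]
    ring

lemma dedekindSum_neg_left (h k : ℤ) : dedekindSum (-h) k = -dedekindSum h k := by
  rw [dedekindSum, dedekindSum, ← sum_neg_distrib]
  refine sum_congr rfl fun μ _ => ?_
  rw [Int.cast_neg, neg_mul, neg_div, saw_neg, neg_mul]

lemma dedekindSum_zero_left (k : ℤ) : dedekindSum 0 k = 0 := by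
  simp [dedekindSum, saw]

lemma dedekindSum_eq_sign_mul_abs (h k : ℤ) : dedekindSum h k = h.sign * dedekindSum |h| k := by
  rcases lt_trichotomy h 0 with hneg | rfl | hpos
  · rw [abs_of_neg hneg, dedekindSum_neg_left, Int.sign_eq_neg_one_of_neg hneg]
    simp
  · simp [dedekindSum_zero_left]
  · simp [abs_of_pos hpos, Int.sign_eq_one_of_pos hpos]

lemma dedekindSum_congr_left {h₁ h₂ k : ℤ} (hmod : h₁ ≡ h₂ [ZMOD k]) :
    dedekindSum h₁ k = dedekindSum h₂ k := by
  refine sum_congr rfl fun μ _ => ?_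
  have hcast : ∀ h : ℤ, (h : ℝ) * μ = ((h * μ : ℤ) : ℝ) := fun h => by push_cast; rfl
  rw [hcast, hcast, saw_intCast_div_emod, saw_intCast_div_emod (h₂ * μ), (hmod.mul_right μ).eq]

lemma card_Ioo_zero {k : ℤ} (hk : 0 < k) : ((Ioo 0 k).card : ℤ) = k - 1 := by
  rw [Int.card_Ioo, sub_zero, Int.toNat_of_nonneg (by omega)]

section Coprime

variable {h k : ℤ}

lemma not_dvd_mul_of_mem_Ioo (hco : IsCoprime h k) {μ : ℤ} (hμ : μ ∈ Ioo 0 k) : ¬k ∣ h * μ := by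
  rw [mem_Ioo] at hμ
  exact fun hdvd => hμ.1.ne' (Int.eq_zero_of_dvd_of_nonneg_of_lt hμ.1.le hμ.2
    (hco.symm.dvd_of_dvd_mul_left hdvd))

lemma mul_emod_mem_Ioo (hk : 0 < k) (hco : IsCoprime h k) {μ : ℤ} (hμ : μ ∈ Ioo 0 k) :
    h * μ % k ∈ Ioo 0 k := by
  refine mem_Ioo.mpr ⟨lt_of_le_of_ne (Int.emod_nonneg _ hk.ne') fun h0 => ?_,
    Int.emod_lt_of_pos _ hk⟩
  exact not_dvd_mul_of_mem_Ioo hco hμ (Int.dvd_of_emod_eq_zero h0.symm)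

lemma sum_Ioo_comp_mul_emod {M : Type*} [AddCommMonoid M] (hk : 0 < k) (hco : IsCoprime h k)
    (f : ℤ → M) : ∑ μ ∈ Ioo 0 k, f (h * μ % k) = ∑ μ ∈ Ioo 0 k, f μ := by
  obtain ⟨u, v, huv⟩ := hco
  have cancel : ∀ {x y : ℤ}, x * y ≡ 1 [ZMOD k] → ∀ a ∈ Ioo 0 k, x * (y * a % k) % k = a := by
    intro x y hxy a ha
    rw [Int.mul_emod, Int.emod_emod_of_dvd _ dvd_rfl, ← Int.mul_emod, ← mul_assoc,
      (hxy.mul_right a).eq, one_mul, Int.emod_eq_of_lt (mem_Ioo.mp ha).1.le (mem_Ioo.mp ha).2]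
  have huh : u * h ≡ 1 [ZMOD k] := by
    rw [← huv, Int.ModEq, Int.add_mul_emod_self_right]
  refine sum_nbij' (h * · % k) (u * · % k) (fun a ha => mul_emod_mem_Ioo hk ⟨u, v, huv⟩ ha)
    (fun a ha => mul_emod_mem_Ioo hk ⟨h, v, by linear_combination huv⟩ ha)
    (cancel huh) (cancel (by rwa [mul_comm] at huh)) fun _ _ => rfl

lemma twelve_mul_dedekindSum (hk : 0 < k) (hco : IsCoprime h k) :
    12 * k * dedekindSum h k
      = ((2 * h * (k - 1) * (2 * k - 1) - 3 * k * (k - 1)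
          - 12 * ∑ μ ∈ Ioo 0 k, μ * (h * μ / k) : ℤ) : ℝ) := by
  have hkR : (k : ℝ) ≠ 0 := by exact_mod_cast hk.ne'
  have saw_div : ∀ r ∈ Ioo 0 k, saw (r / k) = r / k - 1 / 2 := fun r hr => by
    obtain ⟨hr0, hrk⟩ := mem_Ioo.mp hr
    exact saw_of_mem_Ioo ⟨by positivity, (div_lt_one (by exact_mod_cast hk)).mpr
      (by exact_mod_cast hrk)⟩
  have hterm : ∀ μ ∈ Ioo 0 k, saw (h * μ / k) * saw (μ / k)
      = (((2 * (h * μ % k) - k) * (2 * μ - k) : ℤ) : ℝ) / (4 * k ^ 2) := fun μ hμ => by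
    rw [show (h : ℝ) * μ = ((h * μ : ℤ) : ℝ) by push_cast; rfl, saw_intCast_div_emod,
      saw_div _ (mul_emod_mem_Ioo hk hco hμ), saw_div _ hμ]
    field_simp
    push_cast
    ring
  have hIcc : Icc 1 k = insert k (Ioo 0 k) := by
    ext; simp only [mem_Icc, mem_insert, mem_Ioo]; omega
  have hsum : 3 * ∑ μ ∈ Ioo 0 k, (2 * (h * μ % k) - k) * (2 * μ - k)
      = k * (2 * h * (k - 1) * (2 * k - 1) - 3 * k * (k - 1)
          - 12 * ∑ μ ∈ Ioo 0 k, μ * (h * μ / k)) := by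
    have expand : ∀ μ ∈ Ioo 0 k, (2 * (h * μ % k) - k) * (2 * μ - k)
        = 4 * h * μ ^ 2 - 4 * k * (μ * (h * μ / k)) - 2 * k * (h * μ % k) - 2 * k * μ + k ^ 2 :=
      fun μ _ => by rw [Int.emod_def]; ring
    have hperm : ∑ μ ∈ Ioo 0 k, h * μ % k = ∑ μ ∈ Ioo 0 k, μ := sum_Ioo_comp_mul_emod hk hco id
    rw [sum_congr rfl expand, sum_add_distrib, sum_sub_distrib, sum_sub_distrib, sum_sub_distrib,
      ← mul_sum, ← mul_sum, ← mul_sum, ← mul_sum, hperm, sum_const, nsmul_eq_mul, card_Ioo_zero hk]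
    linear_combination (2 * h) * six_mul_sum_Ioo_sq hk - (6 * k) * two_mul_sum_Ioo_id hk
  have hsumR := congrArg (Int.cast : ℤ → ℝ) hsum
  push_cast at hsumR
  rw [dedekindSum, hIcc, sum_insert (by simp), div_self hkR, ← Int.cast_one, saw_intCast, mul_zero,
    zero_add, sum_congr rfl hterm, ← sum_div]
  push_cast
  field_simp
  linear_combination 4 * hsumR

lemma filter_mul_lt_mul_eq_Ioc (hk : 0 < k) (hco : IsCoprime h k) {μ : ℤ} (hμ : μ ∈ Ioo 0 k) :
    {ν ∈ Ioo 0 h | k * ν < h * μ} = Ioc 0 (h * μ / k) := by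
  obtain ⟨hμ0, hμk⟩ := mem_Ioo.mp hμ
  have hne : ∀ ν, k * ν ≠ h * μ := fun ν he => not_dvd_mul_of_mem_Ioo hco hμ ⟨ν, he.symm⟩
  ext ν
  simp only [mem_filter, mem_Ioo, mem_Ioc, Int.le_ediv_iff_mul_le hk]
  constructor
  · rintro ⟨⟨hν0, -⟩, hlt⟩
    exact ⟨hν0, by linarith⟩
  · rintro ⟨hν0, hle⟩
    have hlt : k * ν < h * μ := lt_of_le_of_ne (by linarith) (hne ν)
    exact ⟨⟨hν0, by nlinarith⟩, hlt⟩

lemma filter_mul_lt_mul_eq_Ioo (hh : 0 < h) (hk : 0 ≤ k) {ν : ℤ} (hν : ν ∈ Ioo 0 h) :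
    {μ ∈ Ioo 0 k | k * ν < h * μ} = Ioo (k * ν / h) k := by
  have hq : 0 ≤ k * ν / h := Int.ediv_nonneg (mul_nonneg hk (mem_Ioo.mp hν).1.le) hh.le
  ext μ
  simp only [mem_filter, mem_Ioo, Int.ediv_lt_iff_lt_mul hh, mul_comm μ h]
  constructor
  · rintro ⟨⟨-, hμk⟩, hlt⟩
    exact ⟨hlt, hμk⟩
  · rintro ⟨hlt, hμk⟩
    exact ⟨⟨hq.trans_lt ((Int.ediv_lt_iff_lt_mul hh).mpr (by linarith)), hμk⟩, hlt⟩

lemma two_mul_sum_mul_ediv (hh : 0 < h) (hk : 0 < k) (hco : IsCoprime h k) :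
    2 * ∑ μ ∈ Ioo 0 k, μ * (h * μ / k)
      = ∑ ν ∈ Ioo 0 h, ((k - 1) * k - k * ν / h * (k * ν / h + 1)) := by
  -- sum `μ` over the lattice points `0 < μ < k`, `0 < ν < h`, `kν < hμ`, by rows and by columns
  have row : ∀ μ ∈ Ioo 0 k, μ * (h * μ / k) = ∑ ν ∈ Ioo 0 h with k * ν < h * μ, μ :=
    fun μ hμ => by
      rw [filter_mul_lt_mul_eq_Ioc hk hco hμ, sum_const, Int.card_Ioc, sub_zero, nsmul_eq_mul,
        Int.toNat_of_nonneg (Int.ediv_nonneg (by nlinarith [mem_Ioo.mp hμ]) hk.le), mul_comm]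
  rw [sum_congr rfl row, sum_comm' (t' := Ioo 0 h) (s' := fun ν => {μ ∈ Ioo 0 k | k * ν < h * μ})
    (by intros; simp only [mem_filter]; tauto), mul_sum]
  refine sum_congr rfl fun ν hν => ?_
  have hq : k * ν / h < k := (Int.ediv_lt_iff_lt_mul hh).mpr (by nlinarith [mem_Ioo.mp hν])
  rw [filter_mul_lt_mul_eq_Ioo hh hk.le hν, two_mul_sum_Ioo_id hq]
  ring

lemma sum_mul_ediv_reciprocity (hh : 0 < h) (hk : 0 < k) (hco : IsCoprime h k) :
    12 * (h * ∑ μ ∈ Ioo 0 k, μ * (h * μ / k) + k * ∑ ν ∈ Ioo 0 h, ν * (k * ν / h))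
      = (h - 1) * (k - 1) * (8 * h * k - h - k - 1) := by
  have count := two_mul_sum_mul_ediv hh hk hco
  rw [sum_sub_distrib, sum_const, nsmul_eq_mul, card_Ioo_zero hh] at count
  have lin : ∑ ν ∈ Ioo 0 h, (k * ν - h * (k * ν / h)) = ∑ ν ∈ Ioo 0 h, ν := by
    simpa only [Int.emod_def] using sum_Ioo_comp_mul_emod hh hco.symm fun ν => ν
  have quad : ∑ ν ∈ Ioo 0 h, (k ^ 2 * ν ^ 2 - 2 * h * k * (ν * (k * ν / h))
      + h ^ 2 * (k * ν / h * (k * ν / h + 1)) - h ^ 2 * (k * ν / h)) = ∑ ν ∈ Ioo 0 h, ν ^ 2 := by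
    rw [← sum_Ioo_comp_mul_emod hh hco.symm (· ^ 2)]
    exact sum_congr rfl fun ν _ => by rw [Int.emod_def]; ring
  rw [sum_sub_distrib, ← mul_sum, ← mul_sum] at lin
  simp only [sum_add_distrib, sum_sub_distrib, ← mul_sum] at quad
  refine mul_left_cancel₀ hh.ne' ?_
  linear_combination (6 * h ^ 2) * count - 6 * quad + (6 * h) * lin
    + (k ^ 2 - 1) * six_mul_sum_Ioo_sq hh - (3 * h * (k - 1)) * two_mul_sum_Ioo_id hh

theorem dedekindSum_add_dedekindSum (hh : 0 < h) (hk : 0 < k) (hco : IsCoprime h k) :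
    dedekindSum h k + dedekindSum k h = -1 / 4 + (h ^ 2 + k ^ 2 + 1) / (12 * h * k) := by
  have hhR : (h : ℝ) ≠ 0 := by exact_mod_cast hh.ne'
  have hkR : (k : ℝ) ≠ 0 := by exact_mod_cast hk.ne'
  have hs := twelve_mul_dedekindSum hk hco
  have hs' := twelve_mul_dedekindSum hh hco.symm
  have hD := congrArg (Int.cast : ℤ → ℝ) (sum_mul_ediv_reciprocity hh hk hco)
  push_cast at hs hs' hD
  field_simp
  linear_combination (4 * h) * hs + (4 * k) * hs' - 4 * hD

end Coprime

lemma dedekindSum_reciprocity_of_ne_zero {c d : ℤ} (hc : c ≠ 0) (hd : d ≠ 0) (hco : IsCoprime c d) :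
    12 * c * d * (d.sign * dedekindSum c |d| + c.sign * dedekindSum d |c|)
      = c ^ 2 + d ^ 2 + 1 - 3 * |c * d| := by
  have habs : ∀ x : ℤ, (x.sign : ℝ) * x = |(x : ℝ)| := fun x => by
    exact_mod_cast Int.sign_mul_self_eq_abs x
  have hrec := dedekindSum_add_dedekindSum (abs_pos.mpr hc) (abs_pos.mpr hd) hco.abs_abs
  have hcR : |(c : ℝ)| ≠ 0 := by positivity
  have hdR : |(d : ℝ)| ≠ 0 := by positivity
  rw [dedekindSum_eq_sign_mul_abs c, dedekindSum_eq_sign_mul_abs d]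
  calc _ = 12 * ((c.sign : ℝ) * c) * ((d.sign : ℝ) * d)
        * (dedekindSum |c| |d| + dedekindSum |d| |c|) := by ring
    _ = _ := by
      rw [habs, habs, hrec]
      push_cast
      rw [abs_mul, ← sq_abs (c : ℝ), ← sq_abs (d : ℝ)]
      field_simp
      ring

lemma Int.sign_sub_sign (x y : ℤ) : x.sign - y.sign = (x - y).sign * (1 - (x * y).sign) := by
  rcases lt_trichotomy x 0 with hx | rfl | hx <;> rcases lt_trichotomy y 0 with hy | rfl | hy <;>
    simp [Int.sign_mul, Int.sign_eq_neg_one_of_neg, Int.sign_eq_one_of_pos, *]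
  · rw [Int.sign_eq_neg_one_of_neg (by omega)]; rfl
  · omega

/-- With `(x₁, y₁)` the bottom row of `A` and `(x₂, y₂) = (B 1 0, B 0 0)`, `y₁ y₂ - x₁ x₂` is the
bottom-left entry of `A S B`. -/
lemma Int.sign_mul_add_sign_mul_mul_sub {x₁ y₁ x₂ y₂ : ℤ} (h₁ : x₁ ≠ 0 ∨ y₁ ≠ 0)
    (h₂ : x₂ ≠ 0 ∨ y₂ ≠ 0) :
    (x₁ * y₁).sign + (y₁ * x₂ * (y₁ * y₂ - x₁ * x₂)).sign
      = (x₂ * y₂).sign + (x₁ * y₂ * (y₁ * y₂ - x₁ * x₂)).sign := by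
  have key := Int.sign_sub_sign (y₁ * y₂) (x₁ * x₂)
  simp only [Ne, ← Int.sign_eq_zero_iff_zero (a := x₁), ← Int.sign_eq_zero_iff_zero (a := y₁),
    ← Int.sign_eq_zero_iff_zero (a := x₂), ← Int.sign_eq_zero_iff_zero (a := y₂)] at h₁ h₂
  simp only [Int.sign_mul] at key ⊢
  generalize (y₁ * y₂ - x₁ * x₂).sign = z at key ⊢
  rcases Int.sign_trichotomy x₁ with hx₁ | hx₁ | hx₁ <;>
  rcases Int.sign_trichotomy y₁ with hy₁ | hy₁ | hy₁ <;>
  rcases Int.sign_trichotomy x₂ with hx₂ | hx₂ | hx₂ <;>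
  rcases Int.sign_trichotomy y₂ with hy₂ | hy₂ | hy₂ <;>
  simp only [hx₁, hy₁, hx₂, hy₂, not_true_eq_false, or_self] at key h₁ h₂ ⊢ <;> omega

lemma Rad_one : Rad 1 = 0 := by
  simp [Rad]

lemma Rad_mul_T {γ : Matrix (Fin 2) (Fin 2) ℤ} (hγ : γ.det = 1) (n : ℤ) :
    Rad (γ * !![1, n; 0, 1]) = Rad γ + n := by
  rw [Matrix.det_fin_two] at hγ
  simp only [Rad, Matrix.mul_apply, Fin.sum_univ_two, Matrix.of_apply, Matrix.cons_val',
    Matrix.cons_val_zero, Matrix.cons_val_one, Matrix.cons_val_fin_one, mul_one, mul_zero, add_zero,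
    Int.cast_add, Int.cast_mul]
  generalize γ 0 0 = a, γ 0 1 = b, γ 1 0 = c, γ 1 1 = d at hγ ⊢
  split_ifs with hc
  · subst hc
    obtain ⟨rfl, rfl⟩ | ⟨rfl, rfl⟩ := Int.eq_one_or_neg_one_of_mul_eq_one' (by linarith : a * d = 1)
    all_goals push_cast; ring
  · have hcR : (c : ℝ) ≠ 0 := by exact_mod_cast hc
    have hmod : c * n + d ≡ d [ZMOD |c|] := Int.modEq_iff_dvd.mpr ((abs_dvd _ _).mpr ⟨-n, by ring⟩)
    rw [dedekindSum_congr_left hmod]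
    field_simp
    ring

lemma Rad_mul_S {γ : Matrix (Fin 2) (Fin 2) ℤ} (hγ : γ.det = 1) :
    Rad (γ * !![0, -1; 1, 0]) = Rad γ - 3 * ((γ 1 0 * γ 1 1).sign : ℝ) := by
  rw [Matrix.det_fin_two] at hγ
  simp only [Rad, Matrix.mul_apply, Fin.sum_univ_two, Matrix.of_apply, Matrix.cons_val',
    Matrix.cons_val_zero, Matrix.cons_val_one, Matrix.cons_val_fin_one, mul_zero, mul_one, zero_add,
    add_zero, mul_neg, Int.cast_neg, neg_div_neg_eq, Int.sign_mul, Int.cast_mul]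
  generalize γ 0 0 = a, γ 0 1 = b, γ 1 0 = c, γ 1 1 = d at hγ ⊢
  split_ifs with hd hc hc
  · simp [hd, hc] at hγ
  · simp [hd, dedekindSum_zero_left]
  · simp [hc, dedekindSum_zero_left]
  · have hcR : (c : ℝ) ≠ 0 := by exact_mod_cast hc
    have hdR : (d : ℝ) ≠ 0 := by exact_mod_cast hd
    have hγR : (a : ℝ) * d - b * c = 1 := by exact_mod_cast hγ
    have hcd : ((|c * d| : ℤ) : ℝ) = c.sign * d.sign * (c * d) := by
      rw [← Int.sign_mul_self_eq_abs, Int.sign_mul]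
      push_cast
      ring
    have hrec := dedekindSum_reciprocity_of_ne_zero hc hd ⟨-b, a, by linarith⟩
    rw [hcd] at hrec
    rw [dedekindSum_neg_left]
    field_simp
    linear_combination hrec - hγR

lemma Rad_T (n : ℤ) : Rad !![1, n; 0, 1] = n := by
  simp [Rad]

lemma Rad_S : Rad !![0, -1; 1, 0] = 0 := by
  simp [Rad, dedekindSum_zero_left]

def RadQuasiAdditive (A B : Matrix (Fin 2) (Fin 2) ℤ) : Prop :=
  Rad (A * B) = Rad A + Rad B - 3 * ((A 1 0 * B 1 0 * (A * B) 1 0).sign : ℝ)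

lemma radQuasiAdditive_T_zpow_mul {B : SL(2, ℤ)} (hB : ∀ A : SL(2, ℤ), RadQuasiAdditive A B)
    (n : ℤ) (A : SL(2, ℤ)) : RadQuasiAdditive A ↑(T ^ n * B) := by
  have hAT := hB (A * T ^ n)
  have hT := hB (T ^ n)
  simp only [RadQuasiAdditive, Matrix.SpecialLinearGroup.coe_mul, coe_T_zpow] at hAT hT ⊢
  rw [← mul_assoc, hAT, Rad_mul_T A.det_coe, hT, Rad_T]
  simp only [Matrix.mul_apply, Fin.sum_univ_two, Matrix.of_apply, Matrix.cons_val',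
    Matrix.cons_val_zero, Matrix.cons_val_one, Matrix.cons_val_fin_one, mul_zero, mul_one, zero_mul,
    one_mul, zero_add, add_zero, Int.sign_zero, Int.cast_zero, sub_zero]
  ring

lemma radQuasiAdditive_S_mul {B : SL(2, ℤ)} (hB : ∀ A : SL(2, ℤ), RadQuasiAdditive A B)
    (A : SL(2, ℤ)) : RadQuasiAdditive A ↑(S * B) := by
  have hAS := hB (A * S)
  have hS := hB S
  simp only [RadQuasiAdditive, Matrix.SpecialLinearGroup.coe_mul, coe_S] at hAS hS ⊢
  have hA : (A : Matrix (Fin 2) (Fin 2) ℤ) 1 0 ≠ 0 ∨ (A : Matrix (Fin 2) (Fin 2) ℤ) 1 1 ≠ 0 := by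
    by_contra! h
    have hdet := A.det_coe
    rw [Matrix.det_fin_two, h.1, h.2] at hdet
    simp at hdet
  have hB' : (B : Matrix (Fin 2) (Fin 2) ℤ) 1 0 ≠ 0 ∨ (B : Matrix (Fin 2) (Fin 2) ℤ) 0 0 ≠ 0 := by
    by_contra! h
    have hdet := B.det_coe
    rw [Matrix.det_fin_two, h.1, h.2] at hdet
    simp at hdet
  have key := congrArg (Int.cast : ℤ → ℝ) (Int.sign_mul_add_sign_mul_mul_sub hA hB')
  rw [← mul_assoc, hAS, Rad_mul_S A.det_coe, hS, Rad_S]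
  simp only [Matrix.mul_apply, Fin.sum_univ_two, Int.sign_mul, Int.cast_mul, Int.cast_add,
    Matrix.of_apply, Matrix.cons_val', Matrix.cons_val_zero, Matrix.cons_val_one,
    Matrix.cons_val_fin_one, mul_zero, mul_one, zero_add, add_zero, zero_mul, one_mul, mul_neg,
    neg_mul, ← sub_eq_add_neg] at key ⊢
  linear_combination -3 * key

theorem radQuasiAdditive (A B : SL(2, ℤ)) : RadQuasiAdditive A B := by
  have hB : B ∈ Subgroup.closure {S, T} := SpecialLinearGroup.SL2Z_generators ▸ Subgroup.mem_top B
  induction hB using Subgroup.closure_induction_left generalizing A with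
  | one => simp [RadQuasiAdditive, Rad_one]
  | mul_left x hx y _ ih =>
    rcases hx with rfl | rfl
    · exact radQuasiAdditive_S_mul ih A
    · simpa using radQuasiAdditive_T_zpow_mul ih 1 A
  | inv_mul_cancel x hx y _ ih =>
    rcases hx with rfl | rfl
    · rw [show S⁻¹ = S * S * S by decide, mul_assoc, mul_assoc]
      exact radQuasiAdditive_S_mul (radQuasiAdditive_S_mul (radQuasiAdditive_S_mul ih)) A
    · simpa using radQuasiAdditive_T_zpow_mul ih (-1) A

/-- The quasi-morphism property of the Rademacher symbol. -/
theorem rademacher_quasimorphism (γ₁ γ₂ : Matrix (Fin 2) (Fin 2) ℤ)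
    (h₁ : γ₁.det = 1) (h₂ : γ₂.det = 1) :
    Rad (γ₁ * γ₂) = Rad γ₁ + Rad γ₂
      - 3 * ((γ₁ 1 0 * γ₂ 1 0 * (γ₁ * γ₂) 1 0).sign : ℝ) :=
  radQuasiAdditive ⟨γ₁, h₁⟩ ⟨γ₂, h₂⟩
end

section
/- Let z ∈ 𝔥 (upper half-plane), a, c nonzero reals, b, d reals with ad - bc = 1, and p > 0. Then log((-√p·a·z - √p·b)/(i·sgn(-a))) + (1/2)[log(p·w/i) + log(w/i)] = log((cz+d)/(i·sgn(c))) - (πi/2)·sgn(-ac), where w = (cz+d)/(-paz-pb) ∈ 𝔥 and log is the principal branch. -/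
open Complex

lemma logmul_pos_re {x y : ℂ} (hx : 0 < x.re) (hy : 0 < y.re) :
    Complex.log (x * y) = Complex.log x + Complex.log y := by
  have hx0 : x ≠ 0 := by intro h; simp [h] at hx
  have hy0 : y ≠ 0 := by intro h; simp [h] at hy
  have h1 : |arg x| < Real.pi / 2 := abs_arg_lt_pi_div_two_iff.mpr (Or.inl hx)
  have h2 : |arg y| < Real.pi / 2 := abs_arg_lt_pi_div_two_iff.mpr (Or.inl hy)
  rw [abs_lt] at h1 h2
  exact Complex.log_mul hx0 hy0 ⟨by linarith [h1.1, h2.1], by linarith [h1.2, h2.2]⟩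

lemma logmul_unit {x : ℂ} (hx : 0 < x.re) (σ : ℝ) (hσ : σ = 1 ∨ σ = -1) :
    Complex.log (x * (-Complex.I * (σ:ℂ))) = Complex.log x - Real.pi / 2 * Complex.I * (σ:ℂ) := by
  have hx0 : x ≠ 0 := by intro h; simp [h] at hx
  have h1 : |arg x| < Real.pi / 2 := abs_arg_lt_pi_div_two_iff.mpr (Or.inl hx)
  rw [abs_lt] at h1
  have hpi := Real.pi_pos
  rcases hσ with rfl | rfl
  · have hy : -Complex.I * ((1:ℝ):ℂ) = -Complex.I := by push_cast; ring
    rw [hy, Complex.log_mul hx0 (by simp) ?_, Complex.log_neg_I]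
    · push_cast; ring
    · rw [Complex.arg_neg_I]
      exact ⟨by linarith [h1.1], by linarith [h1.2]⟩
  · have hy : -Complex.I * ((-1:ℝ):ℂ) = Complex.I := by push_cast; ring
    rw [hy, Complex.log_mul hx0 Complex.I_ne_zero ?_, Complex.log_I]
    · push_cast; ring
    · rw [Complex.arg_I]
      exact ⟨by linarith [h1.1], by linarith [h1.2]⟩

lemma master (z : ℂ) (hz : 0 < z.im)
    (a c : ℝ) (ha : a ≠ 0) (hc : c ≠ 0) (b d : ℝ) (hdet : a * d - b * c = 1)
    (p : ℝ) (hp : 0 < p)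
    (w : ℂ) (hw : w = ((c : ℂ) * z + (d : ℂ)) / (-(p : ℂ) * (a : ℂ) * z - (p : ℂ) * (b : ℂ)))
    (s t σ : ℝ) (hs : s = 1 ∨ s = -1) (ht : t = 1 ∨ t = -1) (hσ : σ = s * t)
    (hsa : 0 < s * (-a)) (htc : 0 < t * c) :
    Complex.log ((-(Real.sqrt p : ℂ) * (a : ℂ) * z - (Real.sqrt p : ℂ) * (b : ℂ)) /
        (Complex.I * (s : ℂ)))
      + (1/2 : ℂ) * (Complex.log ((p : ℂ) * w / Complex.I) + Complex.log (w / Complex.I))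
    = Complex.log (((c : ℂ) * z + (d : ℂ)) / (Complex.I * (t : ℂ)))
      - (Real.pi : ℂ) * Complex.I / 2 * (σ : ℂ) := by
  set sp := Real.sqrt p with hsp_def
  have hsp : 0 < sp := Real.sqrt_pos.mpr hp
  have hsp2 : sp * sp = p := Real.mul_self_sqrt hp.le
  have hsp2' : (sp : ℂ) * (sp : ℂ) = (p : ℂ) := by exact_mod_cast congrArg Complex.ofReal hsp2
  set A : ℂ := -(sp : ℂ) * (a : ℂ) * z - (sp : ℂ) * (b : ℂ) with hA
  set Cc : ℂ := (c : ℂ) * z + (d : ℂ) with hC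
  have hAre : A.re = -(sp * a) * z.re - sp * b := by simp [hA]
  have hAim : A.im = -(sp * a) * z.im := by simp [hA]
  have hCre : Cc.re = c * z.re + d := by simp [hC]
  have hCim : Cc.im = c * z.im := by simp [hC]
  have hA0 : A ≠ 0 := by
    intro h
    have h2 : A.im = 0 := by rw [h]; simp
    rw [hAim] at h2
    exact (mul_ne_zero (neg_ne_zero.mpr (mul_ne_zero hsp.ne' ha)) hz.ne') h2
  have hC0 : Cc ≠ 0 := by
    intro h
    have h2 : Cc.im = 0 := by rw [h]; simp
    rw [hCim] at h2
    exact (mul_ne_zero hc hz.ne') h2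
  set u : ℂ := Cc / (Complex.I * A) with hu
  have hure : 0 < u.re := by
    have h1 : u.re = (Cc.im * A.re - Cc.re * A.im) / Complex.normSq A := by
      rw [hu, Complex.div_re]
      simp only [Complex.mul_re, Complex.mul_im, Complex.I_re, Complex.I_im,
        Complex.normSq_mul, Complex.normSq_I]
      ring
    have h3 : Cc.im * A.re - Cc.re * A.im = sp * z.im := by
      rw [hCre, hCim, hAre, hAim]; linear_combination sp * z.im * hdet
    have h4 : 0 < Complex.normSq A := Complex.normSq_pos.mpr hA0
    rw [h1, h3]; positivity
  have hu0 : u ≠ 0 := by intro h; simp [h] at hure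
  have hIA0 : Complex.I * A ≠ 0 := mul_ne_zero Complex.I_ne_zero hA0
  have huA : u * (Complex.I * A) = Cc := div_mul_cancel₀ _ hIA0
  -- rewrite w
  have hden : -(p : ℂ) * (a : ℂ) * z - (p : ℂ) * (b : ℂ) = (sp : ℂ) * A := by
    rw [hA]; linear_combination ((a : ℂ) * z + (b : ℂ)) * hsp2'
  have hw' : w = Cc / ((sp : ℂ) * A) := by rw [hw, hden, hC]
  have hspc0 : (sp : ℂ) ≠ 0 := by exact_mod_cast hsp.ne'
  clear_value A Cc u
  -- middle terms
  have hm2 : w / Complex.I = ((sp⁻¹ : ℝ) : ℂ) * u := by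
    rw [hw', hu]; push_cast; ring
  have hm1 : (p : ℂ) * w / Complex.I = (sp : ℂ) * u := by
    rw [hw', hu, mul_div_assoc', div_div, mul_div_assoc']
    rw [div_eq_div_iff (mul_ne_zero (mul_ne_zero hspc0 hA0) Complex.I_ne_zero) hIA0]
    linear_combination (-Cc * Complex.I * A) * hsp2'
  have hmid : Complex.log ((p : ℂ) * w / Complex.I) + Complex.log (w / Complex.I)
      = 2 * Complex.log u := by
    rw [hm1, hm2, Complex.log_ofReal_mul hsp hu0,
        Complex.log_ofReal_mul (inv_pos.mpr hsp) hu0, Real.log_inv]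
    push_cast; ring
  -- sign facts
  have hsC : (s : ℂ) * (s : ℂ) = 1 := by rcases hs with rfl | rfl <;> norm_num
  have htC : (t : ℂ) * (t : ℂ) = 1 := by rcases ht with rfl | rfl <;> norm_num
  have hsC0 : (s : ℂ) ≠ 0 := by rcases hs with rfl | rfl <;> norm_num
  have htC0 : (t : ℂ) ≠ 0 := by rcases ht with rfl | rfl <;> norm_num
  -- first term
  have hE1 : A / (Complex.I * (s : ℂ)) = -Complex.I * (s : ℂ) * A := by
    rw [div_eq_iff (mul_ne_zero Complex.I_ne_zero hsC0)]
    linear_combination A * (s : ℂ) * (s : ℂ) * Complex.I_mul_I - A * hsC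
  have hE1re : 0 < (A / (Complex.I * (s : ℂ))).re := by
    have h1 : (A / (Complex.I * (s : ℂ))).re = s * A.im := by
      rw [hE1]
      simp only [neg_mul, Complex.neg_re, Complex.mul_re, Complex.mul_im, Complex.I_re,
        Complex.I_im, Complex.ofReal_re, Complex.ofReal_im]
      ring
    rw [h1, hAim]
    have h2 : s * (-(sp * a) * z.im) = sp * (s * (-a)) * z.im := by ring
    rw [h2]; positivity
  have hE3 : Cc / (Complex.I * (t : ℂ)) = -Complex.I * (t : ℂ) * Cc := by
    rw [div_eq_iff (mul_ne_zero Complex.I_ne_zero htC0)]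
    linear_combination Cc * (t : ℂ) * (t : ℂ) * Complex.I_mul_I - Cc * htC
  have hE3re : 0 < (Cc / (Complex.I * (t : ℂ))).re := by
    have h1 : (Cc / (Complex.I * (t : ℂ))).re = t * Cc.im := by
      rw [hE3]
      simp only [neg_mul, Complex.neg_re, Complex.mul_re, Complex.mul_im, Complex.I_re,
        Complex.I_im, Complex.ofReal_re, Complex.ofReal_im]
      ring
    rw [h1, hCim]
    have h2 : t * (c * z.im) = (t * c) * z.im := by ring
    rw [h2]; positivity
  -- combine
  rw [hmid]
  have hcomb : Complex.log (A / (Complex.I * (s : ℂ))) + (1/2 : ℂ) * (2 * Complex.log u)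
      = Complex.log (A / (Complex.I * (s : ℂ)) * u) := by
    rw [logmul_pos_re hE1re hure]; ring
  rw [hcomb]
  have h5 : -Complex.I * (s : ℂ) * A * u = -(s : ℂ) * Cc := by
    linear_combination (-(s : ℂ)) * huA
  have hprod : A / (Complex.I * (s : ℂ)) * u
      = Cc / (Complex.I * (t : ℂ)) * (-Complex.I * (σ : ℂ)) := by
    rw [hE1, hE3, h5, hσ]
    push_cast
    linear_combination (-(s : ℂ) * (t : ℂ) * (t : ℂ) * Cc) * Complex.I_mul_I
      + (s : ℂ) * Cc * htC
  have hσ' : σ = 1 ∨ σ = -1 := by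
    rcases hs with rfl | rfl <;> rcases ht with rfl | rfl <;> rw [hσ] <;> norm_num
  rw [hprod, logmul_unit hE3re σ hσ']
  ring

/-- the logarithm identity used in the proof of Theorem 1 (case ac ≠ 0). -/
theorem log_identity_fricke (z : ℂ) (hz : 0 < z.im)
    (a c : ℝ) (ha : a ≠ 0) (hc : c ≠ 0) (b d : ℝ) (hdet : a * d - b * c = 1)
    (p : ℝ) (hp : 0 < p)
    (w : ℂ) (hw : w = ((c : ℂ) * z + (d : ℂ)) / (-(p : ℂ) * (a : ℂ) * z - (p : ℂ) * (b : ℂ))) :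
    Complex.log ((-(Real.sqrt p : ℂ) * (a : ℂ) * z - (Real.sqrt p : ℂ) * (b : ℂ)) /
        (Complex.I * (Real.sign (-a) : ℂ)))
      + (1/2 : ℂ) * (Complex.log ((p : ℂ) * w / Complex.I) + Complex.log (w / Complex.I))
    = Complex.log (((c : ℂ) * z + (d : ℂ)) / (Complex.I * (Real.sign c : ℂ)))
      - (Real.pi : ℂ) * Complex.I / 2 * (Real.sign (-(a * c)) : ℂ) := by
  have sgn_pm : ∀ x : ℝ, x ≠ 0 → Real.sign x = 1 ∨ Real.sign x = -1 := by
    intro x hx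
    rcases hx.lt_or_gt with h | h
    · exact Or.inr (Real.sign_of_neg h)
    · exact Or.inl (Real.sign_of_pos h)
  have sgn_mul_pos : ∀ x : ℝ, x ≠ 0 → 0 < Real.sign x * x := by
    intro x hx
    rcases hx.lt_or_gt with h | h
    · rw [Real.sign_of_neg h]; nlinarith
    · rw [Real.sign_of_pos h]; nlinarith
  have hσeq : Real.sign (-(a * c)) = Real.sign (-a) * Real.sign c := by
    rcases ha.lt_or_gt with h1 | h1 <;> rcases hc.lt_or_gt with h2 | h2
    · rw [Real.sign_of_neg (by nlinarith : -(a * c) < 0), Real.sign_of_pos (by linarith : 0 < -a),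
        Real.sign_of_neg h2]; norm_num
    · rw [Real.sign_of_pos (by nlinarith : 0 < -(a * c)), Real.sign_of_pos (by linarith : 0 < -a),
        Real.sign_of_pos h2]; norm_num
    · rw [Real.sign_of_pos (by nlinarith : 0 < -(a * c)), Real.sign_of_neg (by linarith : -a < 0),
        Real.sign_of_neg h2]; norm_num
    · rw [Real.sign_of_neg (by nlinarith : -(a * c) < 0), Real.sign_of_neg (by linarith : -a < 0),
        Real.sign_of_pos h2]; norm_num
  exact master z hz a c ha hc b d hdet p hp w hw
    (Real.sign (-a)) (Real.sign c) (Real.sign (-(a * c)))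
    (sgn_pm _ (neg_ne_zero.mpr ha)) (sgn_pm _ hc) hσeq
    (sgn_mul_pos _ (neg_ne_zero.mpr ha)) (sgn_mul_pos _ hc)
end
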